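/- Let (X,f) be a TDS and φ, ψ ∈ C(X,ℝ) with ψ > 0. Define for T > 0: G_T = {n ∈ ℕ : ∃x, S_nψ(x) > T}, Y_n = {x : S_nψ(x) > T}, and R_{ψ,T}(f,φ,ε) = sup{ Σ_{n∈G_T} Σ_{x∈E'_n} exp(S_nφ(x)) : E'_n (n,ε)-separated set of Y_n }. Then P_ψ(φ) = inf{ β ∈ ℝ : lim_{ε→0} limsup_{T→∞} R_{ψ,T}(f, φ − βψ, ε) < ∞ } (with inf ∅ = ∞). -/

import Mathlib

open MeasureTheory Filter Topology Set

variable {X : Type*}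

/-- Birkhoff sum `S_n φ (x) = ∑_{i<n} φ(f^i x)`. -/
noncomputable def birkhoff (f : X → X) (φ : X → ℝ) (n : ℕ) (x : X) : ℝ :=
  ∑ i ∈ Finset.range n, φ (f^[i] x)

/-- The `n`-th Bowen metric. -/
noncomputable def dynDist [MetricSpace X] (f : X → X) (n : ℕ) (x y : X) : ℝ :=
  ⨆ i : Fin n, dist (f^[(i : ℕ)] x) (f^[(i : ℕ)] y)

/-- `F` is an `(n,ε)`-spanning set of `Z`. -/
def IsSpanningSet [MetricSpace X] (f : X → X) (n : ℕ) (ε : ℝ) (Z : Set X) (F : Finset X) : Prop :=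
  ∀ y ∈ Z, ∃ x ∈ F, dynDist f n x y ≤ ε

/-- `E` is `(n,ε)`-separated. -/
def IsSeparatedSet [MetricSpace X] (f : X → X) (n : ℕ) (ε : ℝ) (E : Finset X) : Prop :=
  ∀ x ∈ E, ∀ y ∈ E, x ≠ y → ε < dynDist f n x y

/-- `S_T = {n : ∃ x, S_n ψ(x) ≤ T < S_{n+1} ψ(x)}`. -/
def STset (f : X → X) (ψ : X → ℝ) (T : ℝ) : Set ℕ :=
  {n | ∃ x : X, birkhoff f ψ n x ≤ T ∧ T < birkhoff f ψ (n + 1) x}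

/-- `X_n = {x : S_n ψ(x) ≤ T < S_{n+1} ψ(x)}`. -/
def Xset (f : X → X) (ψ : X → ℝ) (T : ℝ) (n : ℕ) : Set X :=
  {x | birkhoff f ψ n x ≤ T ∧ T < birkhoff f ψ (n + 1) x}

/-- `Q_{ψ,T}(f,φ,ε)`, the spanning-set quantity. -/
noncomputable def Qspan [MetricSpace X] (f : X → X) (φ ψ : X → ℝ) (T ε : ℝ) : ℝ :=
  sInf { r : ℝ | ∃ F : ℕ → Finset X,
    (∀ n ∈ STset f ψ T, IsSpanningSet f n ε (Xset f ψ T n) (F n)) ∧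
    r = ∑' n : ℕ, Set.indicator (STset f ψ T)
        (fun n => ∑ x ∈ F n, Real.exp (birkhoff f φ n x)) n }

/-- `P_{ψ,T}(f,φ,ε)`, the separated-set quantity. -/
noncomputable def Psep [MetricSpace X] (f : X → X) (φ ψ : X → ℝ) (T ε : ℝ) : ℝ :=
  sSup { r : ℝ | ∃ E : ℕ → Finset X,
    (∀ n ∈ STset f ψ T, (E n : Set X) ⊆ Xset f ψ T n ∧ IsSeparatedSet f n ε (E n)) ∧
    r = ∑' n : ℕ, Set.indicator (STset f ψ T)
        (fun n => ∑ x ∈ E n, Real.exp (birkhoff f φ n x)) n }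

/-- The `ψ`-induced topological pressure of `φ`. -/
noncomputable def inducedPressure [MetricSpace X] (f : X → X) (φ ψ : X → ℝ) : EReal :=
  ⨆ (ε : ℝ) (_ : 0 < ε),
    Filter.limsup (fun T : ℝ => ((T⁻¹ * Real.log (Qspan f φ ψ T ε) : ℝ) : EReal)) atTop

/-- Largest sum over `(n,ε)`-separated sets of `X`. -/
noncomputable def sepSum [MetricSpace X] (f : X → X) (φ : X → ℝ) (n : ℕ) (ε : ℝ) : ℝ :=
  sSup { r : ℝ | ∃ E : Finset X, IsSeparatedSet f n ε E ∧
    r = ∑ x ∈ E, Real.exp (birkhoff f φ n x) }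

/-- The classical (Walters) topological pressure. -/
noncomputable def topPressure [MetricSpace X] (f : X → X) (φ : X → ℝ) : EReal :=
  ⨆ (ε : ℝ) (_ : 0 < ε),
    Filter.limsup (fun n : ℕ => (((n : ℝ)⁻¹ * Real.log (sepSum f φ n ε) : ℝ) : EReal)) atTop

/-- `G_T = {n : ∃ x, S_n ψ(x) > T}`. -/
def GTset (f : X → X) (ψ : X → ℝ) (T : ℝ) : Set ℕ :=
  {n | ∃ x : X, T < birkhoff f ψ n x}

/-- `Y_n = {x : S_n ψ(x) > T}`. -/
def Yset (f : X → X) (ψ : X → ℝ) (T : ℝ) (n : ℕ) : Set X :=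
  {x | T < birkhoff f ψ n x}

/-- `R_{ψ,T}(f,φ,ε)`: supremum over `(n,ε)`-separated subsets of `Y_n`, `n ∈ G_T`. -/
noncomputable def Rsep [MetricSpace X] (f : X → X) (φ ψ : X → ℝ) (T ε : ℝ) : ENNReal :=
  ⨆ (E : ℕ → Finset X)
    (_ : ∀ n ∈ GTset f ψ T, (E n : Set X) ⊆ Yset f ψ T n ∧ IsSeparatedSet f n ε (E n)),
    ∑' n : ℕ, Set.indicator (GTset f ψ T)
      (fun n => ENNReal.ofReal (∑ x ∈ E n, Real.exp (birkhoff f φ n x))) n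

/-!
Let `0 < m ≤ ψ ≤ M`. A point of `X_n(t)` has `t - M < S_n ψ ≤ t`, so there `exp (S_n (φ - β ψ))`
and `exp (S_n φ - β t)` agree up to a factor `e^{|β| M}`.

If `R_{ψ,T}(f, φ - β ψ, ε)` stays bounded, maximal `(n, ε)`-separated subsets of the `X_n(T)` are
also spanning, and `X_n(T) ⊆ Y_n(T - M)`; this gives `Q_T ≤ e^{β T + |β| M} R_{T - M}`, hence
`P_ψ(φ) ≤ β`.

Conversely, if `P_ψ(φ) < β' < β` then `Q_t(ε/2) < e^{β' t}` for large `t`. Every point of `Y_n(T)`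
lies in `X_n(t)` for a threshold `t = T + (k + 1) m`. At a scale where `φ` oscillates by less
than `γ = m (β - β') / 2`, passing from a separated to a spanning set costs `e^{n γ} ≤ e^{t γ / m}`,
so the threshold `t` contributes at most `e^{|β| M - (β - β') t / 2}` to `R_T`: a geometric series
in `k`, bounded uniformly in `T ≥ 0` and `ε`.
-/

open Real

section BowenMetric

variable [MetricSpace X] {f : X → X} {n : ℕ} {ε : ℝ}

theorem dynDist_eq_dist (f : X → X) (n : ℕ) (x y : X) :
    dynDist f n x y = dist (fun i : Fin n => f^[i] x) (fun i : Fin n => f^[i] y) :=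
  le_antisymm (Real.iSup_le (fun i => dist_le_pi_dist (fun i : Fin n => f^[i] x)
      (fun i : Fin n => f^[i] y) i) dist_nonneg)
    ((dist_pi_le_iff (Real.iSup_nonneg fun _ => dist_nonneg)).2 fun i =>
      le_ciSup (f := fun i : Fin n => dist (f^[i] x) (f^[i] y)) (Set.finite_range _).bddAbove i)

theorem dynDist_self (x : X) : dynDist f n x x = 0 := by
  rw [dynDist_eq_dist, dist_self]

theorem dynDist_comm (x y : X) : dynDist f n x y = dynDist f n y x := by
  rw [dynDist_eq_dist, dynDist_eq_dist, dist_comm]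

theorem dynDist_triangle (x y z : X) : dynDist f n x z ≤ dynDist f n x y + dynDist f n y z := by
  simp only [dynDist_eq_dist]
  exact dist_triangle _ _ _

theorem dist_iterate_le_dynDist {i : ℕ} (hi : i < n) (x y : X) :
    dist (f^[i] x) (f^[i] y) ≤ dynDist f n x y := by
  rw [dynDist_eq_dist]
  exact dist_le_pi_dist (fun i : Fin n => f^[i] x) (fun i : Fin n => f^[i] y) ⟨i, hi⟩

theorem continuous_dynDist (hf : Continuous f) (x : X) : Continuous (dynDist f n x) := by
  simp only [funext (dynDist_eq_dist f n x)]
  exact continuous_const.dist (continuous_pi fun i => hf.iterate i)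

theorem exists_isSpanningSet_univ [CompactSpace X] (hf : Continuous f) (n : ℕ) (hε : 0 < ε) :
    ∃ F : Finset X, IsSpanningSet f n ε univ F := by
  obtain ⟨F, hF⟩ := CompactSpace.elim_nhds_subcover (fun x => {y | dynDist f n x y < ε})
    fun x => (isOpen_lt (continuous_dynDist hf x) continuous_const).mem_nhds
      (by simpa [dynDist_self] using hε)
  refine ⟨F, fun y _ => ?_⟩
  obtain ⟨x, hx, hxy⟩ : ∃ x ∈ F, dynDist f n x y < ε := by simpa using hF.ge (mem_univ y)
  exact ⟨x, hx, hxy.le⟩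

theorem IsSpanningSet.mono {Z Z' : Set X} {F : Finset X} (hF : IsSpanningSet f n ε Z F)
    (hZ : Z' ⊆ Z) : IsSpanningSet f n ε Z' F :=
  fun y hy => hF y (hZ hy)

theorem IsSeparatedSet.mono {ε' : ℝ} {E : Finset X} (hE : IsSeparatedSet f n ε E) (h : ε' ≤ ε) :
    IsSeparatedSet f n ε' E :=
  fun x hx y hy hxy => h.trans_lt (hE x hx y hy hxy)

theorem IsSeparatedSet.subset {E E' : Finset X} (hE : IsSeparatedSet f n ε E) (h : E' ⊆ E) :
    IsSeparatedSet f n ε E' :=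
  fun x hx y hy => hE x (h hx) y (h hy)

theorem IsSeparatedSet.insert [DecidableEq X] {E : Finset X} {z : X} (hE : IsSeparatedSet f n ε E)
    (hz : ∀ x ∈ E, ε < dynDist f n x z) : IsSeparatedSet f n ε (insert z E) := by
  intro x hx y hy hxy
  rcases Finset.mem_insert.1 hx with rfl | hxE <;> rcases Finset.mem_insert.1 hy with rfl | hyE
  · exact absurd rfl hxy
  · exact dynDist_comm x y ▸ hz y hyE
  · exact hz x hxE
  · exact hE x hxE y hyE hxy

theorem IsSeparatedSet.exists_injOn {E F : Finset X} (hE : IsSeparatedSet f n ε E)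
    (hF : IsSpanningSet f n (ε / 2) E F) :
    ∃ g : X → X, MapsTo g E F ∧ InjOn g E ∧ ∀ x ∈ E, dynDist f n (g x) x ≤ ε / 2 := by
  choose! g hgF hg using hF
  refine ⟨g, hgF, fun x hx y hy hxy => by_contra fun hne => (hE x hx y hy hne).not_ge ?_, hg⟩
  calc dynDist f n x y ≤ dynDist f n (g x) x + dynDist f n (g y) y := by
        rw [dynDist_comm (g x), hxy]; exact dynDist_triangle _ _ _
    _ ≤ ε := by linarith [hg x hx, hg y hy]

theorem IsSeparatedSet.card_le {E F : Finset X} (hE : IsSeparatedSet f n ε E)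
    (hF : IsSpanningSet f n (ε / 2) E F) : E.card ≤ F.card :=
  let ⟨g, hgF, hg, _⟩ := hE.exists_injOn hF
  Finset.card_le_card_of_injOn g hgF hg

theorem exists_isSeparatedSet_isSpanningSet [CompactSpace X] (hf : Continuous f) (n : ℕ)
    (hε : 0 < ε) (Z : Set X) :
    ∃ E : Finset X, ↑E ⊆ Z ∧ IsSeparatedSet f n ε E ∧ IsSpanningSet f n ε Z E := by
  classical
  obtain ⟨F, hF⟩ := exists_isSpanningSet_univ hf n (half_pos hε)
  let 𝒮 := {E : Finset X | ↑E ⊆ Z ∧ IsSeparatedSet f n ε E}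
  have hbdd : BddAbove (Finset.card '' 𝒮) :=
    ⟨F.card, by rintro _ ⟨E, hE, rfl⟩; exact hE.2.card_le (hF.mono (subset_univ _))⟩
  obtain ⟨E, hE, hEmax⟩ := Nat.sSup_mem (s := Finset.card '' 𝒮)
    ⟨0, ∅, ⟨by simp, by simp [IsSeparatedSet]⟩, rfl⟩ hbdd
  refine ⟨E, hE.1, hE.2, fun z hz => ?_⟩
  by_contra! hfar
  have hzE : z ∉ E := fun h => (hfar z h).not_ge (by rw [dynDist_self]; exact hε.le)
  have hins : insert z E ∈ 𝒮 :=
    ⟨by simpa [Finset.coe_insert] using insert_subset hz hE.1, hE.2.insert hfar⟩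
  have := le_csSup hbdd ⟨_, hins, rfl⟩
  rw [Finset.card_insert_of_notMem hzE, hEmax] at this
  omega

end BowenMetric

theorem sum_exp_le_exp_mul_sum_exp {ι : Type*} (s : Finset ι) {a b : ι → ℝ} {c : ℝ}
    (h : ∀ i ∈ s, a i ≤ b i + c) : ∑ i ∈ s, exp (a i) ≤ exp c * ∑ i ∈ s, exp (b i) := by
  rw [Finset.mul_sum]
  exact Finset.sum_le_sum fun i hi => by rw [← exp_add]; exact exp_le_exp.2 (by linarith [h i hi])

section Birkhoff

variable {f : X → X}

theorem birkhoff_succ (φ : X → ℝ) (n : ℕ) (x : X) :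
    birkhoff f φ (n + 1) x = birkhoff f φ n x + φ (f^[n] x) :=
  Finset.sum_range_succ _ _

theorem natCast_mul_le_birkhoff {φ : X → ℝ} {c : ℝ} (hc : ∀ x, c ≤ φ x) (n : ℕ) (x : X) :
    n * c ≤ birkhoff f φ n x := by
  simpa [birkhoff] using Finset.card_nsmul_le_sum (Finset.range n) _ c fun i _ => hc (f^[i] x)

theorem birkhoff_sub_mul (φ ψ : X → ℝ) (β : ℝ) (n : ℕ) (x : X) :
    birkhoff f (fun x => φ x - β * ψ x) n x = birkhoff f φ n x - β * birkhoff f ψ n x := by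
  simp [birkhoff, Finset.sum_sub_distrib, Finset.mul_sum]

variable [MetricSpace X] {φ : X → ℝ} {n : ℕ}

theorem abs_birkhoff_sub_le {δ γ : ℝ} (hγ : ∀ x y, dist x y ≤ δ → |φ x - φ y| ≤ γ) {x y : X}
    (h : dynDist f n x y ≤ δ) : |birkhoff f φ n x - birkhoff f φ n y| ≤ n * γ := by
  rw [birkhoff, birkhoff, ← Finset.sum_sub_distrib]
  refine (Finset.abs_sum_le_sum_abs _ _).trans ?_
  simpa using Finset.sum_le_card_nsmul _ _ γ fun i hi =>
    hγ _ _ ((dist_iterate_le_dynDist (Finset.mem_range.1 hi) x y).trans h)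

theorem IsSeparatedSet.sum_exp_birkhoff_le {ε γ : ℝ}
    (hγ : ∀ x y, dist x y ≤ ε / 2 → |φ x - φ y| ≤ γ) {E F : Finset X}
    (hE : IsSeparatedSet f n ε E) (hF : IsSpanningSet f n (ε / 2) E F) :
    ∑ x ∈ E, exp (birkhoff f φ n x) ≤ exp (n * γ) * ∑ y ∈ F, exp (birkhoff f φ n y) := by
  classical
  obtain ⟨g, hgF, hg, hgx⟩ := hE.exists_injOn hF
  calc ∑ x ∈ E, exp (birkhoff f φ n x) ≤ exp (n * γ) * ∑ x ∈ E, exp (birkhoff f φ n (g x)) :=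
        sum_exp_le_exp_mul_sum_exp E fun x hx => by
          linarith [(abs_le.1 (abs_birkhoff_sub_le hγ (hgx x hx))).1]
    _ = exp (n * γ) * ∑ y ∈ E.image g, exp (birkhoff f φ n y) := by rw [Finset.sum_image hg]
    _ ≤ exp (n * γ) * ∑ y ∈ F, exp (birkhoff f φ n y) := by
        gcongr
        exact Finset.image_subset_iff.2 hgF

end Birkhoff

section LevelSets

variable {f : X → X} {ψ : X → ℝ} {m M T : ℝ} {n : ℕ} {x : X}

theorem sub_lt_birkhoff_of_mem_Xset (hM : ∀ x, ψ x ≤ M) (hx : x ∈ Xset f ψ T n) :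
    T - M < birkhoff f ψ n x := by
  linarith [hx.2, hM (f^[n] x), birkhoff_succ (f := f) ψ n x]

theorem abs_birkhoff_sub_mul_sub_le (φ : X → ℝ) (β : ℝ) (hM : ∀ x, ψ x ≤ M)
    (hx : x ∈ Xset f ψ T n) :
    |birkhoff f (fun x => φ x - β * ψ x) n x - (birkhoff f φ n x - β * T)| ≤ |β| * M := by
  rw [birkhoff_sub_mul, show ∀ a b : ℝ, a - β * b - (a - β * T) = β * (T - b) by intros; ring,
    abs_mul, abs_of_nonneg (sub_nonneg.2 hx.1)]
  exact mul_le_mul_of_nonneg_left (by linarith [sub_lt_birkhoff_of_mem_Xset hM hx]) (abs_nonneg β)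

theorem Xset_subset_Yset (hM : ∀ x, ψ x ≤ M) : Xset f ψ T n ⊆ Yset f ψ (T - M) n :=
  fun _ hx => sub_lt_birkhoff_of_mem_Xset hM hx

theorem natCast_mul_le_of_mem_STset (hm : ∀ x, m ≤ ψ x) (hn : n ∈ STset f ψ T) : n * m ≤ T :=
  let ⟨x, hx, _⟩ := hn
  (natCast_mul_le_birkhoff hm n x).trans hx

theorem STset_finite (hm : ∀ x, m ≤ ψ x) (hm0 : 0 < m) : (STset f ψ T).Finite :=
  (Set.finite_Iic ⌊T / m⌋₊).subset fun _ hn =>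
    Nat.le_floor ((le_div_iff₀ hm0).2 (natCast_mul_le_of_mem_STset hm hn))

theorem STset_nonempty [Nonempty X] (hm : ∀ x, m ≤ ψ x) (hm0 : 0 < m) (hT : 0 ≤ T) :
    (STset f ψ T).Nonempty := by
  classical
  obtain ⟨x⟩ := ‹Nonempty X›
  have hex : ∃ n, T < birkhoff f ψ n x := by
    obtain ⟨n, hn⟩ := exists_nat_gt (T / m)
    exact ⟨n, ((div_lt_iff₀ hm0).1 hn).trans_le (natCast_mul_le_birkhoff hm n x)⟩
  obtain ⟨k, hk⟩ : ∃ k, Nat.find hex = k + 1 := Nat.exists_eq_succ_of_ne_zero fun h => by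
    have := Nat.find_spec hex
    rw [h, birkhoff, Finset.sum_range_zero] at this
    linarith
  exact ⟨k, x, not_lt.1 (Nat.find_min hex (by omega)), hk ▸ Nat.find_spec hex⟩

/-- The thresholds `T + (k + 1) m` are `m`-spaced, while `S_{n+1} ψ ≥ S_n ψ + m`. -/
theorem exists_mem_Xset_of_mem_Yset (hm : ∀ x, m ≤ ψ x) (hm0 : 0 < m)
    (hx : x ∈ Yset f ψ T n) : ∃ k : ℕ, x ∈ Xset f ψ (T + (k + 1) * m) n := by
  have hs : 0 < (birkhoff f ψ n x - T) / m := div_pos (sub_pos.2 hx) hm0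
  obtain ⟨k, hk⟩ := Nat.exists_eq_succ_of_ne_zero (Nat.ceil_pos.2 hs).ne'
  have hle := Nat.le_ceil ((birkhoff f ψ n x - T) / m)
  have hlt := Nat.ceil_lt_add_one hs.le
  rw [hk, Nat.cast_succ, div_le_iff₀ hm0] at hle
  rw [hk, Nat.cast_succ, add_lt_add_iff_right, lt_div_iff₀ hm0] at hlt
  exact ⟨k, by linarith, by linarith [hm (f^[n] x), birkhoff_succ (f := f) ψ n x]⟩

end LevelSets

noncomputable def stSum (f : X → X) (φ ψ : X → ℝ) (T : ℝ) (E : ℕ → Finset X) : ℝ :=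
  ∑' n : ℕ, Set.indicator (STset f ψ T) (fun n => ∑ x ∈ E n, exp (birkhoff f φ n x)) n

section STsum

variable {f : X → X} {φ ψ : X → ℝ} {m T : ℝ} {E F : ℕ → Finset X}

theorem summable_indicator_STset (hm : ∀ x, m ≤ ψ x) (hm0 : 0 < m) (g : ℕ → ℝ) :
    Summable ((STset f ψ T).indicator g) :=
  summable_of_hasFiniteSupport ((STset_finite hm hm0).subset support_indicator_subset)

theorem stSum_nonneg : 0 ≤ stSum f φ ψ T E :=
  tsum_nonneg fun _ => indicator_nonneg (fun _ _ => by positivity) _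

theorem sum_le_stSum (hm : ∀ x, m ≤ ψ x) (hm0 : 0 < m) {n : ℕ} (hn : n ∈ STset f ψ T) :
    ∑ x ∈ E n, exp (birkhoff f φ n x) ≤ stSum f φ ψ T E := by
  have := (summable_indicator_STset (f := f) (T := T) hm hm0
    fun n => ∑ x ∈ E n, exp (birkhoff f φ n x)).le_tsum n fun _ _ =>
      indicator_nonneg (fun _ _ => by positivity) _
  rwa [indicator_of_mem hn] at this

theorem stSum_le_mul_stSum (hm : ∀ x, m ≤ ψ x) (hm0 : 0 < m) {φ' : X → ℝ} {c : ℝ}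
    (h : ∀ n ∈ STset f ψ T,
      ∑ x ∈ E n, exp (birkhoff f φ n x) ≤ c * ∑ x ∈ F n, exp (birkhoff f φ' n x)) :
    stSum f φ ψ T E ≤ c * stSum f φ' ψ T F := by
  rw [stSum, stSum, ← tsum_mul_left]
  refine Summable.tsum_le_tsum (fun n => ?_) (summable_indicator_STset hm hm0 _)
    ((summable_indicator_STset hm hm0 _).mul_left c)
  by_cases hn : n ∈ STset f ψ T
  · simpa only [indicator_of_mem hn] using h n hn
  · simp [indicator_of_notMem hn]

theorem ofReal_stSum (hm : ∀ x, m ≤ ψ x) (hm0 : 0 < m) (hE : ∀ n, ↑(E n) ⊆ Xset f ψ T n) :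
    ENNReal.ofReal (stSum f φ ψ T E) =
      ∑' n, ENNReal.ofReal (∑ x ∈ E n, exp (birkhoff f φ n x)) := by
  have hS : (STset f ψ T).indicator (fun n => ∑ x ∈ E n, exp (birkhoff f φ n x)) =
      fun n => ∑ x ∈ E n, exp (birkhoff f φ n x) :=
    indicator_eq_self.2 <| Function.support_subset_iff'.2 fun n hn => by
      simp [Finset.eq_empty_of_forall_notMem fun x hx => hn ⟨x, hE n hx⟩]
  rw [stSum, ENNReal.ofReal_tsum_of_nonneg (fun _ => indicator_nonneg (fun _ _ => by positivity) _)
    (summable_indicator_STset hm hm0 _), hS]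

end STsum

section Qspan

variable [MetricSpace X] {f : X → X} {φ ψ : X → ℝ} {m T ε : ℝ}

theorem Qspan_le_stSum {F : ℕ → Finset X}
    (hF : ∀ n ∈ STset f ψ T, IsSpanningSet f n ε (Xset f ψ T n) (F n)) :
    Qspan f φ ψ T ε ≤ stSum f φ ψ T F :=
  csInf_le ⟨0, by rintro _ ⟨F, -, rfl⟩; exact stSum_nonneg⟩ ⟨F, hF, rfl⟩

variable [CompactSpace X]

theorem exists_isSpanningSet_Xset (hf : Continuous f) (hε : 0 < ε) :
    ∃ F : ℕ → Finset X, ∀ n ∈ STset f ψ T, IsSpanningSet f n ε (Xset f ψ T n) (F n) := by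
  choose F hF using fun n => exists_isSpanningSet_univ hf n hε
  exact ⟨F, fun n _ => (hF n).mono (subset_univ _)⟩

theorem exists_stSum_lt_of_Qspan_lt (hf : Continuous f) (hε : 0 < ε) {b : ℝ}
    (h : Qspan f φ ψ T ε < b) :
    ∃ F : ℕ → Finset X, (∀ n ∈ STset f ψ T, IsSpanningSet f n ε (Xset f ψ T n) (F n)) ∧
      stSum f φ ψ T F < b := by
  obtain ⟨F₀, hF₀⟩ := exists_isSpanningSet_Xset (ψ := ψ) (T := T) hf hε
  obtain ⟨_, ⟨F, hF, rfl⟩, hlt⟩ := exists_lt_of_csInf_lt (by exact ⟨_, F₀, hF₀, rfl⟩) h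
  exact ⟨F, hF, hlt⟩

theorem Qspan_pos [Nonempty X] (hf : Continuous f) (hm : ∀ x, m ≤ ψ x) (hm0 : 0 < m) {c : ℝ}
    (hc : ∀ x, c ≤ φ x) (hT : 0 ≤ T) (hε : 0 < ε) : 0 < Qspan f φ ψ T ε := by
  obtain ⟨n, x, hx⟩ := STset_nonempty (f := f) hm hm0 hT
  obtain ⟨F₀, hF₀⟩ := exists_isSpanningSet_Xset (ψ := ψ) (T := T) hf hε
  refine (exp_pos (n * c)).trans_le (le_csInf (by exact ⟨_, F₀, hF₀, rfl⟩) ?_)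
  rintro _ ⟨F, hF, rfl⟩
  obtain ⟨y, hy, -⟩ := hF n ⟨x, hx⟩ x hx
  calc exp (n * c) ≤ exp (birkhoff f φ n y) := exp_le_exp.2 (natCast_mul_le_birkhoff hc n y)
    _ ≤ ∑ y ∈ F n, exp (birkhoff f φ n y) :=
        Finset.single_le_sum (f := fun y => exp (birkhoff f φ n y)) (fun _ _ => by positivity) hy
    _ ≤ stSum f φ ψ T F := sum_le_stSum hm hm0 ⟨x, hx⟩

end Qspan

section Rsep

variable [MetricSpace X] {f : X → X} {φ ψ : X → ℝ} {T ε : ℝ}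

/-- `Y_n` is empty off `G_T`, so the indicator in `Rsep` can be dropped. -/
theorem Rsep_eq : Rsep f φ ψ T ε = ⨆ (E : ℕ → Finset X)
      (_ : ∀ n, ↑(E n) ⊆ Yset f ψ T n ∧ IsSeparatedSet f n ε (E n)),
      ∑' n, ENNReal.ofReal (∑ x ∈ E n, exp (birkhoff f φ n x)) := by
  classical
  refine le_antisymm (iSup₂_le fun E hE => ?_) (iSup₂_le fun E hE => ?_)
  · refine le_iSup₂_of_le (fun n => if n ∈ GTset f ψ T then E n else ∅) (fun n => ?_)
      (le_of_eq (tsum_congr fun n => ?_))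
    · dsimp only
      split_ifs with hn
      · exact hE n hn
      · simp [IsSeparatedSet]
    · by_cases hn : n ∈ GTset f ψ T <;> simp [hn]
  · refine le_iSup₂_of_le E (fun n _ => hE n) (le_of_eq (tsum_congr fun n => ?_))
    by_cases hn : n ∈ GTset f ψ T
    · rw [indicator_of_mem hn]
    · simp [indicator_of_notMem hn,
        Finset.eq_empty_of_forall_notMem fun x hx => hn ⟨x, (hE n).1 hx⟩]

theorem Rsep_anti {ε' : ℝ} (h : ε' ≤ ε) : Rsep f φ ψ T ε ≤ Rsep f φ ψ T ε' := by
  rw [Rsep_eq, Rsep_eq]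
  exact iSup₂_le fun E hE => le_iSup₂_of_le E (fun n => ⟨(hE n).1, (hE n).2.mono h⟩) le_rfl

end Rsep

open scoped Classical in
theorem ofReal_sum_le_tsum_ofReal_sum_filter {α : Type*} (s : Finset α) {w : α → ℝ}
    (hw : ∀ x ∈ s, 0 ≤ w x) {A : ℕ → Set α} (hA : ∀ x ∈ s, ∃ k, x ∈ A k) :
    ENNReal.ofReal (∑ x ∈ s, w x) ≤ ∑' k, ENNReal.ofReal (∑ x ∈ s with x ∈ A k, w x) :=
  calc ENNReal.ofReal (∑ x ∈ s, w x) = ∑ x ∈ s, ENNReal.ofReal (w x) :=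
        ENNReal.ofReal_sum_of_nonneg hw
    _ ≤ ∑ x ∈ s, ∑' k, (A k).indicator (fun x => ENNReal.ofReal (w x)) x :=
        Finset.sum_le_sum fun x hx => by
          obtain ⟨k, hk⟩ := hA x hx
          exact (indicator_of_mem hk _).symm.le.trans (ENNReal.le_tsum
            (f := fun k => (A k).indicator (fun x => ENNReal.ofReal (w x)) x) k)
    _ = ∑' k, ∑ x ∈ s, (A k).indicator (fun x => ENNReal.ofReal (w x)) x :=
        (Summable.tsum_finsetSum fun _ _ => ENNReal.summable).symm
    _ = ∑' k, ENNReal.ofReal (∑ x ∈ s with x ∈ A k, w x) := tsum_congr fun k => by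
        rw [ENNReal.ofReal_sum_of_nonneg fun x hx => hw x (Finset.mem_filter.1 hx).1,
          Finset.sum_filter]
        simp only [indicator_apply]

open scoped Classical in
theorem tsum_ofReal_le_tsum_ofReal_stSum {f : X → X} {φ ψ : X → ℝ} {m T : ℝ}
    (hm : ∀ x, m ≤ ψ x) (hm0 : 0 < m) {E : ℕ → Finset X} (hE : ∀ n, ↑(E n) ⊆ Yset f ψ T n) :
    ∑' n, ENNReal.ofReal (∑ x ∈ E n, exp (birkhoff f φ n x)) ≤
      ∑' k : ℕ, ENNReal.ofReal (stSum f φ ψ (T + (k + 1) * m)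
        fun n => {x ∈ E n | x ∈ Xset f ψ (T + (k + 1) * m) n}) :=
  calc _ ≤ ∑' (n : ℕ) (k : ℕ), ENNReal.ofReal
        (∑ x ∈ E n with x ∈ Xset f ψ (T + (k + 1) * m) n, exp (birkhoff f φ n x)) :=
        ENNReal.tsum_le_tsum fun n => ofReal_sum_le_tsum_ofReal_sum_filter _
          (fun _ _ => by positivity) fun _ hx => exists_mem_Xset_of_mem_Yset hm hm0 (hE n hx)
    _ = _ := by
        rw [ENNReal.tsum_comm]
        exact tsum_congr fun k =>
          (ofReal_stSum hm hm0 fun n _ hx => (Finset.mem_filter.1 hx).2).symm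

theorem eventually_lt_exp_of_limsup_lt {u : ℝ → ℝ} {b : ℝ}
    (h : limsup (fun T => ((T⁻¹ * log (u T) : ℝ) : EReal)) atTop < b) :
    ∀ᶠ T in atTop, u T < exp (b * T) := by
  filter_upwards [eventually_lt_of_limsup_lt h, eventually_gt_atTop 0] with T hT hT0
  have hlog : log (u T) < b * T := by
    rw [EReal.coe_lt_coe_iff, inv_mul_lt_iff₀ hT0, mul_comm] at hT
    exact hT
  rcases le_or_gt (u T) 0 with hu | hu
  · exact hu.trans_lt (exp_pos _)
  · exact (log_lt_iff_lt_exp hu).1 hlog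

theorem limsup_le_of_eventually_le_exp {u : ℝ → ℝ} {b c : ℝ}
    (h : ∀ᶠ T in atTop, 0 < u T ∧ u T ≤ exp (b * T + c)) :
    limsup (fun T => ((T⁻¹ * log (u T) : ℝ) : EReal)) atTop ≤ b := by
  have hlim : Tendsto (fun T : ℝ => ((b + c * T⁻¹ : ℝ) : EReal)) atTop (𝓝 b) :=
    (continuous_coe_real_ereal.tendsto b).comp <| by
      simpa using tendsto_const_nhds.add (tendsto_inv_atTop_zero.const_mul c)
  refine (limsup_le_limsup ?_).trans hlim.limsup_eq.le
  filter_upwards [h, eventually_gt_atTop 0] with T ⟨hu, hle⟩ hT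
  refine EReal.coe_le_coe_iff.2 ?_
  calc T⁻¹ * log (u T) ≤ T⁻¹ * (b * T + c) := by gcongr; exact (log_le_iff_le_exp hu).2 hle
    _ = b + c * T⁻¹ := by field_simp

section Pressure

variable [MetricSpace X] {f : X → X} {φ ψ : X → ℝ} {m M ε : ℝ}

theorem stSum_sub_mul_le (hm : ∀ x, m ≤ ψ x) (hm0 : 0 < m) (hM : ∀ x, ψ x ≤ M) {γ : ℝ}
    (hγ0 : 0 ≤ γ) (hγ : ∀ x y, dist x y ≤ ε / 2 → |φ x - φ y| ≤ γ) (β : ℝ) {t : ℝ}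
    {E F : ℕ → Finset X} (hE : ∀ n, ↑(E n) ⊆ Xset f ψ t n ∧ IsSeparatedSet f n ε (E n))
    (hF : ∀ n ∈ STset f ψ t, IsSpanningSet f n (ε / 2) (Xset f ψ t n) (F n)) :
    stSum f (fun x => φ x - β * ψ x) ψ t E ≤
      exp (|β| * M - β * t + γ / m * t) * stSum f φ ψ t F := by
  refine stSum_le_mul_stSum hm hm0 fun n hn => ?_
  calc ∑ x ∈ E n, exp (birkhoff f (fun x => φ x - β * ψ x) n x)
      ≤ exp (|β| * M - β * t) * ∑ x ∈ E n, exp (birkhoff f φ n x) :=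
        sum_exp_le_exp_mul_sum_exp _ fun x hx => by
          linarith [(abs_le.1 (abs_birkhoff_sub_mul_sub_le φ β hM ((hE n).1 hx))).2]
    _ ≤ exp (|β| * M - β * t) * (exp (n * γ) * ∑ y ∈ F n, exp (birkhoff f φ n y)) := by
        gcongr
        exact (hE n).2.sum_exp_birkhoff_le hγ ((hF n hn).mono (hE n).1)
    _ ≤ exp (|β| * M - β * t + γ / m * t) * ∑ y ∈ F n, exp (birkhoff f φ n y) := by
        have hnt : n * γ ≤ γ / m * t := by
          rw [div_mul_eq_mul_div, le_div_iff₀ hm0]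
          nlinarith [natCast_mul_le_of_mem_STset hm hn]
        rw [← mul_assoc, ← exp_add]
        exact mul_le_mul_of_nonneg_right (exp_le_exp.2 (by linarith)) (by positivity)

variable [CompactSpace X]

theorem ofReal_Qspan_le_mul_Rsep (hf : Continuous f) (hm : ∀ x, m ≤ ψ x) (hm0 : 0 < m)
    (hM : ∀ x, ψ x ≤ M) (hε : 0 < ε) (β T : ℝ) :
    ENNReal.ofReal (Qspan f φ ψ T ε) ≤ ENNReal.ofReal (exp (β * T + |β| * M)) *
      Rsep f (fun x => φ x - β * ψ x) ψ (T - M) ε := by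
  choose E hEX hEsep hEspan using fun n =>
    exists_isSeparatedSet_isSpanningSet hf n hε (Xset f ψ T n)
  have hQ : Qspan f φ ψ T ε ≤
      exp (β * T + |β| * M) * stSum f (fun x => φ x - β * ψ x) ψ T E :=
    (Qspan_le_stSum fun n _ => hEspan n).trans <| stSum_le_mul_stSum hm hm0 fun n _ =>
      sum_exp_le_exp_mul_sum_exp _ fun x hx => by
        linarith [(abs_le.1 (abs_birkhoff_sub_mul_sub_le φ β hM (hEX n hx))).1]
  calc ENNReal.ofReal (Qspan f φ ψ T ε) ≤ ENNReal.ofReal (exp (β * T + |β| * M)) *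
        ENNReal.ofReal (stSum f (fun x => φ x - β * ψ x) ψ T E) := by
        rw [← ENNReal.ofReal_mul (exp_pos _).le]
        exact ENNReal.ofReal_le_ofReal hQ
    _ ≤ _ := by
        rw [ofReal_stSum hm hm0 hEX, Rsep_eq]
        gcongr
        exact le_iSup₂_of_le E (fun n => ⟨(hEX n).trans (Xset_subset_Yset hM), hEsep n⟩) le_rfl

theorem inducedPressure_le_of_iSup_limsup_Rsep_lt_top [Nonempty X] (hf : Continuous f)
    (hφ : BddBelow (range φ)) (hm : ∀ x, m ≤ ψ x) (hm0 : 0 < m) (hM : ∀ x, ψ x ≤ M) {β : ℝ}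
    (h : (⨆ (ε : ℝ) (_ : 0 < ε),
      limsup (fun T => Rsep f (fun x => φ x - β * ψ x) ψ T ε) atTop) < ⊤) :
    inducedPressure f φ ψ ≤ β := by
  obtain ⟨c, hc⟩ := hφ
  refine iSup₂_le fun ε hε => ?_
  obtain ⟨K, -, hLK, -⟩ := ENNReal.lt_iff_exists_real_btwn.1 <| (le_iSup₂ (f := fun ε (_ : 0 < ε) =>
    limsup (fun T => Rsep f (fun x => φ x - β * ψ x) ψ T ε) atTop) ε hε).trans_lt h
  have hK : 0 < K := ENNReal.ofReal_pos.1 (zero_le.trans_lt hLK)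
  have hsub : Tendsto (fun T : ℝ => T - M) atTop atTop := by
    simpa [sub_eq_add_neg] using tendsto_atTop_add_const_right atTop (-M) tendsto_id
  refine limsup_le_of_eventually_le_exp (c := |β| * M + log K) ?_
  filter_upwards [hsub.eventually (eventually_lt_of_limsup_lt hLK), eventually_ge_atTop 0]
    with T hR hT
  refine ⟨Qspan_pos hf hm hm0 (fun x => hc (mem_range_self x)) hT hε, ?_⟩
  have hQ : ENNReal.ofReal (Qspan f φ ψ T ε) ≤ ENNReal.ofReal (exp (β * T + |β| * M) * K) := by
    rw [ENNReal.ofReal_mul (exp_pos _).le]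
    exact (ofReal_Qspan_le_mul_Rsep hf hm hm0 hM hε β T).trans (by gcongr)
  rw [ENNReal.ofReal_le_ofReal_iff (by positivity)] at hQ
  rwa [← add_assoc, exp_add, exp_log hK]

theorem Rsep_sub_mul_le (hf : Continuous f) (hm : ∀ x, m ≤ ψ x) (hm0 : 0 < m)
    (hM : ∀ x, ψ x ≤ M) {γ : ℝ} (hγ0 : 0 ≤ γ) (hγ : ∀ x y, dist x y ≤ ε / 2 → |φ x - φ y| ≤ γ)
    (hε : 0 < ε) {β β' T : ℝ} (hQ : ∀ t ≥ T, Qspan f φ ψ t (ε / 2) < exp (β' * t)) :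
    Rsep f (fun x => φ x - β * ψ x) ψ T ε ≤
      ∑' k : ℕ, ENNReal.ofReal (exp (|β| * M - (β - β' - γ / m) * (T + (k + 1) * m))) := by
  classical
  rw [Rsep_eq]
  refine iSup₂_le fun E hE => (tsum_ofReal_le_tsum_ofReal_stSum hm hm0 fun n => (hE n).1).trans
    (ENNReal.tsum_le_tsum fun k => ENNReal.ofReal_le_ofReal ?_)
  set t := T + (k + 1) * m
  obtain ⟨F, hF, hFlt⟩ := exists_stSum_lt_of_Qspan_lt hf (half_pos hε)
    (hQ t (le_add_of_nonneg_right (by positivity)))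
  calc _ ≤ exp (|β| * M - β * t + γ / m * t) * stSum f φ ψ t F :=
        stSum_sub_mul_le hm hm0 hM hγ0 hγ β (fun n => ⟨fun x hx => (Finset.mem_filter.1 hx).2,
          (hE n).2.subset (Finset.filter_subset _ _)⟩) hF
    _ ≤ exp (|β| * M - β * t + γ / m * t) * exp (β' * t) := by gcongr
    _ = _ := by rw [← exp_add]; ring_nf

theorem iSup_limsup_Rsep_lt_top (hf : Continuous f) (hφ : Continuous φ) (hm : ∀ x, m ≤ ψ x)
    (hm0 : 0 < m) (hM : ∀ x, ψ x ≤ M) {β : ℝ} (hβ : inducedPressure f φ ψ < β) :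
    (⨆ (ε : ℝ) (_ : 0 < ε),
      limsup (fun T => Rsep f (fun x => φ x - β * ψ x) ψ T ε) atTop) < ⊤ := by
  obtain ⟨β', hPβ', hβ'β⟩ := EReal.exists_between_coe_real hβ
  -- `φ` will oscillate by at most `m δ`, which leaves the decay rate `β - β' - δ = δ`.
  obtain ⟨δ, hδ, hβδ⟩ : ∃ δ, 0 < δ ∧ β - β' - δ = δ :=
    ⟨(β - β') / 2, by linarith [EReal.coe_lt_coe_iff.1 hβ'β], by ring⟩
  obtain ⟨d, hd, hφd⟩ := Metric.uniformContinuous_iff.1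
    (CompactSpace.uniformContinuous_of_continuous hφ) (m * δ) (by positivity)
  have hC : ∑' k : ℕ, ENNReal.ofReal (exp (|β| * M) * exp (k * -(δ * m))) < ⊤ := by
    rw [← ENNReal.ofReal_tsum_of_nonneg (fun _ => by positivity)
      ((summable_exp_nat_mul_iff.2 (neg_neg_of_pos (mul_pos hδ hm0))).mul_left _)]
    exact ENNReal.ofReal_lt_top
  have hR : ∀ ε > 0, ∀ᶠ T in atTop, Rsep f (fun x => φ x - β * ψ x) ψ T ε ≤
      ∑' k : ℕ, ENNReal.ofReal (exp (|β| * M) * exp (k * -(δ * m))) := by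
    intro ε hε
    have hε' : 0 < min ε d := lt_min hε hd
    obtain ⟨T₀, hT₀⟩ := eventually_atTop.1 <| eventually_lt_exp_of_limsup_lt <|
      (le_iSup₂ (f := fun ε (_ : 0 < ε) =>
        limsup (fun T => ((T⁻¹ * log (Qspan f φ ψ T ε) : ℝ) : EReal)) atTop)
        (min ε d / 2) (half_pos hε')).trans_lt hPβ'
    filter_upwards [eventually_ge_atTop (max T₀ 0)] with T hT
    have hmod : ∀ x y, dist x y ≤ min ε d / 2 → |φ x - φ y| ≤ m * δ := fun x y hxy =>
      (hφd (hxy.trans_lt (by linarith [min_le_right ε d]))).le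
    calc Rsep f (fun x => φ x - β * ψ x) ψ T ε
        ≤ Rsep f (fun x => φ x - β * ψ x) ψ T (min ε d) := Rsep_anti (min_le_left _ _)
      _ ≤ _ := Rsep_sub_mul_le hf hm hm0 hM (by positivity) hmod hε' fun t ht =>
          hT₀ t ((le_max_left _ _).trans (hT.trans ht))
      _ ≤ _ := by
        refine ENNReal.tsum_le_tsum fun k => ENNReal.ofReal_le_ofReal ?_
        rw [← exp_add, mul_div_cancel_left₀ _ hm0.ne', hβδ]
        exact exp_le_exp.2 (by nlinarith [le_of_max_le_right hT])
  exact (iSup₂_le fun ε hε => limsup_le_of_le (by isBoundedDefault) (hR ε hε)).trans_lt hC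

end Pressure

/-- `P_ψ(φ) = inf{β : lim_{ε→0} limsup_T R_{ψ,T}(f, φ-βψ, ε) < ∞}` (inf ∅ = ∞). -/
theorem stmt6 [MetricSpace X] [CompactSpace X] [Nonempty X]
    (f : X → X) (φ ψ : X → ℝ) (hf : Continuous f) (hφ : Continuous φ) (hψ : Continuous ψ)
    (hpos : ∀ x, 0 < ψ x) :
    inducedPressure f φ ψ =
      sInf { b : EReal | ∃ β : ℝ, b = (β : EReal) ∧
        (⨆ (ε : ℝ) (_ : 0 < ε),
          Filter.limsup (fun T : ℝ => Rsep f (fun x => φ x - β * ψ x) ψ T ε) atTop) < ⊤ } := by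
  obtain ⟨m, hm0, hm⟩ : ∃ m, 0 < m ∧ ∀ x, m ≤ ψ x := by
    obtain ⟨x₀, -, hx₀⟩ := isCompact_univ.exists_isMinOn univ_nonempty hψ.continuousOn
    exact ⟨ψ x₀, hpos x₀, fun x => hx₀ (mem_univ x)⟩
  obtain ⟨M, hM⟩ := (isCompact_range hψ).bddAbove
  have hM' : ∀ x, ψ x ≤ M := fun x => hM (mem_range_self x)
  refine le_antisymm (le_sInf ?_) (EReal.le_of_forall_lt_iff_le.1 fun β hβ => sInf_le ⟨β, rfl, ?_⟩)
  · rintro _ ⟨β, rfl, hβ⟩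
    exact inducedPressure_le_of_iSup_limsup_Rsep_lt_top hf (isCompact_range hφ).bddBelow hm hm0
      hM' hβ
  · exact iSup_limsup_Rsep_lt_top hf hφ hm hm0 hM' hβ
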